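/- arXiv:1904.11958 — 2 statements merged into one kernel-verified Lean document; each statement's English description precedes it below -/
import Mathlib

section
/- Let a ∈ ℂ, let z ∈ ℂ with ‖z‖ < 1, and let t ∈ ℂ satisfy t ≠ x and t + 1 ≠ x for every x ∈ ℕ. Then the Stieltjes transform S(t) = ∑_{x=0}^∞ (a)_x·(z^x/x!)·1/(t − x) of the Meixner weight satisfies (t + 1)·S(t + 1) − z·(t + a)·S(t) = (1 − z)·(1 − z)^{−a}, where (1 − z)^{−a} denotes the principal branch of the complex power. -/
/-!
The weight `ρ x = (a)_x z^x / x!` satisfies the discrete Pearson equation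
`(x + 1) ρ (x + 1) = z (a + x) ρ x`. Put `h x = x ρ x / (t + 1 - x)`. Then the terms of
`(t + 1) S(t + 1)` and of `z (t + a) S(t)` are `ρ x + h x` and `z ρ x + h (x + 1)`, so, since
`h 0 = 0`, the difference telescopes to `(1 - z) ∑ ρ`, and `∑ ρ = (1 - z)^(-a)` is the binomial
series.
-/

open Filter Topology
open scoped Nat

noncomputable def poch (c : ℂ) (n : ℕ) : ℂ := ∏ j ∈ Finset.range n, (c + (j : ℂ))

theorem poch_succ (c : ℂ) (n : ℕ) : poch c (n + 1) = poch c n * (c + n) :=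
  Finset.prod_range_succ _ _

theorem poch_eq_ascPochhammer_eval (c : ℂ) (n : ℕ) : poch c n = (ascPochhammer ℂ n).eval c := by
  induction n with
  | zero => simp [poch]
  | succ n ih => rw [poch_succ, ih, ascPochhammer_succ_eval]

theorem poch_eq_factorial_mul_choose (c : ℂ) (n : ℕ) :
    poch c n = n ! * Ring.choose (c + n - 1) n := by
  rw [poch_eq_ascPochhammer_eval, ← Polynomial.ascPochhammer_smeval_eq_eval,
    ← Ring.factorial_nsmul_multichoose_eq_ascPochhammer, Ring.multichoose_eq, nsmul_eq_mul]

noncomputable def meixnerWeight (a z : ℂ) (x : ℕ) : ℂ := poch a x * (z ^ x / x !)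

noncomputable def stieltjes (ρ : ℕ → ℂ) (t : ℂ) : ℂ := ∑' x : ℕ, ρ x * (1 / (t - x))

theorem meixnerWeight_succ (a z : ℂ) (x : ℕ) :
    (x + 1) * meixnerWeight a z (x + 1) = z * (a + x) * meixnerWeight a z x := by
  simp only [meixnerWeight, poch_succ, Nat.factorial_succ, pow_succ]
  push_cast
  field_simp

theorem hasSum_meixnerWeight (a : ℂ) {z : ℂ} (hz : ‖z‖ < 1) :
    HasSum (meixnerWeight a z) ((1 - z) ^ (-a)) := by
  have h := (Complex.one_div_one_sub_cpow_hasFPowerSeriesOnBall_zero a).hasSum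
    (y := z) (by simpa [← ofReal_norm] using hz)
  simp only [FormalMultilinearSeries.ofScalars_apply_eq, zero_add, smul_eq_mul] at h
  have hterm (n : ℕ) : meixnerWeight a z n = Ring.choose (a + n - 1) n * z ^ n := by
    rw [meixnerWeight, poch_eq_factorial_mul_choose]
    field_simp [n.factorial_ne_zero]
  rw [Complex.cpow_neg, ← one_div, funext hterm]
  exact h

theorem tendsto_one_div_sub_natCast_atTop (s : ℂ) :
    Tendsto (fun x : ℕ => 1 / (s - x)) atTop (𝓝 0) := by
  simpa only [one_div, Function.comp_def] using tendsto_inv₀_cobounded.comp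
    ((tendsto_const_sub_cobounded s).comp (tendsto_natCast_atTop_cobounded (α := ℂ)))

theorem Summable.mul_one_div_sub_natCast {ρ : ℕ → ℂ} (hρ : Summable ρ) (s : ℂ) :
    Summable fun x : ℕ => ρ x * (1 / (s - x)) :=
  (summable_norm_iff.mpr hρ).mul_tendsto_const
    (Nat.cofinite_eq_atTop ▸ tendsto_one_div_sub_natCast_atTop s)

theorem stieltjes_shift_of_pearson {ρ : ℕ → ℂ} (hρ : Summable ρ) {a z : ℂ}
    (hrec : ∀ x : ℕ, (x + 1) * ρ (x + 1) = z * (a + x) * ρ x) {t : ℂ}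
    (ht : ∀ x : ℕ, t ≠ x) (ht1 : t + 1 ≠ 0) :
    (t + 1) * stieltjes ρ (t + 1) - z * (t + a) * stieltjes ρ t = (1 - z) * ∑' x, ρ x := by
  -- `h x = x ρ x / (t + 1 - x)`, written so that no hypothesis on `t + 1 - x` is needed
  set h : ℕ → ℂ := fun x => (t + 1) * (ρ x * (1 / (t + 1 - x))) - ρ x with h_def
  have hh : Summable h := ((hρ.mul_one_div_sub_natCast (t + 1)).mul_left (t + 1)).sub hρ
  have h_zero : h 0 = 0 := by simp [h_def, mul_left_comm _ (ρ 0), ht1]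
  have h_succ (x : ℕ) : h (x + 1) = z * (t + a) * (ρ x * (1 / (t - x))) - z * ρ x := by
    have htx : t - x ≠ 0 := sub_ne_zero.mpr (ht x)
    have hden : t + 1 - ((x + 1 : ℕ) : ℂ) = t - x := by push_cast; ring
    simp only [h_def, hden]
    field_simp
    linear_combination hrec x
  have h_left : (t + 1) * stieltjes ρ (t + 1) = ∑' x, ρ x + ∑' x, h x := by
    rw [stieltjes, ← tsum_mul_left, ← hρ.tsum_add hh]
    exact tsum_congr fun x => by ring
  have h_right : z * (t + a) * stieltjes ρ t = z * ∑' x, ρ x + ∑' x, h x := by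
    rw [hh.tsum_eq_zero_add, h_zero, zero_add, tsum_congr h_succ,
      ((hρ.mul_one_div_sub_natCast t).mul_left _).tsum_sub (hρ.mul_left z), tsum_mul_left,
      tsum_mul_left, stieltjes]
    ring
  rw [h_left, h_right]
  ring

/-- the Stieltjes transform `S(t) = ∑_{x≥0} (a)_x (z^x/x!)/(t-x)` of the
Meixner weight satisfies `(t+1) S(t+1) - z (t+a) S(t) = (1-z)(1-z)^{-a}` (principal branch). -/
theorem meixner_stieltjes (a z : ℂ) (hz : ‖z‖ < 1) (t : ℂ)
    (ht : ∀ x : ℕ, t ≠ (x : ℂ)) (ht1 : ∀ x : ℕ, t + 1 ≠ (x : ℂ)) :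
    (t + 1) * (∑' x : ℕ, poch a x * (z ^ x / (x.factorial : ℂ)) * (1 / (t + 1 - (x : ℂ))))
      - z * (t + a) * (∑' x : ℕ, poch a x * (z ^ x / (x.factorial : ℂ)) * (1 / (t - (x : ℂ))))
      = (1 - z) * (1 - z) ^ (-a) := by
  have hρ := hasSum_meixnerWeight a hz
  have ht1' : t + 1 ≠ 0 := by simpa using ht1 0
  rw [← hρ.tsum_eq]
  exact stieltjes_shift_of_pearson hρ.summable (meixnerWeight_succ a z) ht ht1'
end

section
/- Let a, b ∈ ℂ and N, n ∈ ℕ with n ≤ N, and suppose b + 1 + k ≠ 0 for every natural number k < N. Then the n-th Hahn moment satisfies ∑_{x=0}^N φ_n(x)·(a)_x·(−N)_x/((b + 1)_x · x!) = ((−N)_n·(a)_n/(b + 1)_n)·((b + 1 − a)_{N−n}/(b + 1 + n)_{N−n}). -/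
/-!
The summands with `x < n` vanish because `φ_n(x) = 0` there. Writing `x = n + y` and
`N = n + M`, the factors `(c)_{n+y} = (c)_n (c+n)_y` split off the prefactor
`(-N)_n (a)_n / (b+1)_n`, and `φ_n(n+y) / (n+y)! = 1 / y!`. What is left is the terminating
Gauss sum `₂F₁(-M, a+n; b+1+n; 1) = (b+1-a)_M / (b+1+n)_M`, which is the Chu–Vandermonde
identity for falling factorials (`Ring.descPochhammer_smeval_add`) after rewriting each
rising factorial as a falling one.
-/

open Finset

/-- The falling factorial `φ_n(x) = ∏_{j=0}^{n-1} (x - j)`. -/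
noncomputable def fallFac (n : ℕ) (x : ℂ) : ℂ := ∏ j ∈ Finset.range n, (x - (j : ℂ))

open Polynomial

theorem descPochhammer_int_smeval {R : Type*} [CommRing R] (r : R) (k : ℕ) :
    (descPochhammer ℤ k).smeval r = (descPochhammer R k).eval r := by
  rw [← aeval_eq_smeval, aeval_def, ← eval_map, descPochhammer_map]

theorem descPochhammer_eval_add {R : Type*} [CommRing R] (r s : R) (k : ℕ) :
    (descPochhammer R k).eval (r + s) = ∑ ij ∈ antidiagonal k,
      k.choose ij.1 * ((descPochhammer R ij.1).eval r * (descPochhammer R ij.2).eval s) := by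
  simpa only [descPochhammer_int_smeval] using Ring.descPochhammer_smeval_add k (Commute.all r s)

theorem fallFac_eq_descPochhammer_eval (n : ℕ) (x : ℂ) :
    fallFac n x = (descPochhammer ℂ n).eval x :=
  (descPochhammer_eval_eq_prod_range n x).symm

theorem fallFac_natCast (n m : ℕ) : fallFac n m = m.descFactorial n := by
  rw [fallFac_eq_descPochhammer_eval, descPochhammer_eval_eq_descFactorial]

theorem fallFac_natCast_of_lt {n m : ℕ} (h : m < n) : fallFac n m = 0 := by
  rw [fallFac_natCast, Nat.descFactorial_eq_zero_iff_lt.mpr h, Nat.cast_zero]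

theorem poch_eq_fallFac (c : ℂ) (n : ℕ) : poch c n = fallFac n (c + n - 1) := by
  rw [poch, fallFac, ← prod_range_reflect]
  refine prod_congr rfl fun j hj => ?_
  have hj : j < n := mem_range.mp hj
  rw [Nat.sub_sub, Nat.cast_sub (by omega)]
  push_cast
  ring

theorem poch_neg (c : ℂ) (n : ℕ) : poch (-c) n = (-1) ^ n * fallFac n c := by
  rw [poch, fallFac, show (-1 : ℂ) ^ n = ∏ _j ∈ range n, (-1 : ℂ) by simp, ← prod_mul_distrib]
  exact prod_congr rfl fun j _ => by ring

theorem poch_add (c : ℂ) (m n : ℕ) : poch c (m + n) = poch c m * poch (c + m) n := by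
  rw [poch, prod_range_add, poch, poch]
  exact congrArg _ (prod_congr rfl fun j _ => by push_cast; ring)

theorem poch_ne_zero {c : ℂ} {n : ℕ} (h : ∀ k < n, c + k ≠ 0) : poch c n ≠ 0 :=
  prod_ne_zero_iff.2 fun k hk => h k (mem_range.1 hk)

theorem poch_sub_eq_sum (c d : ℂ) (M : ℕ) :
    poch (d - c) M = ∑ y ∈ range (M + 1),
      (-1) ^ y * M.choose y * poch c y * poch (d + y) (M - y) := by
  -- `(d - c)_M = φ_M(-c + (d + M - 1))`, and Vandermonde's terms are `φ_y(-c) = (-1)^y (c)_y`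
  -- and `φ_{M-y}(d + M - 1) = (d + y)_{M-y}`.
  rw [poch_eq_fallFac, show d - c + M - 1 = -c + (d + M - 1) by ring,
    fallFac_eq_descPochhammer_eval, descPochhammer_eval_add,
    Nat.sum_antidiagonal_eq_sum_range_succ fun i j =>
      (M.choose i : ℂ) * ((descPochhammer ℂ i).eval (-c) * (descPochhammer ℂ j).eval (d + M - 1))]
  refine sum_congr rfl fun y hy => ?_
  have hyM : y ≤ M := Nat.lt_succ_iff.mp (mem_range.mp hy)
  rw [← fallFac_eq_descPochhammer_eval, ← fallFac_eq_descPochhammer_eval, ← neg_neg c, poch_neg,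
    poch_eq_fallFac (d + y), Nat.cast_sub hyM, neg_neg,
    show d + y + (M - y) - 1 = d + M - 1 by ring]
  have h : (-1 : ℂ) ^ y * (-1) ^ y = 1 := by rw [← mul_pow]; norm_num
  linear_combination -(M.choose y * fallFac y (-c) * fallFac (M - y) (d + M - 1) : ℂ) * h

theorem sum_poch_mul_poch_neg_div (c d : ℂ) (M : ℕ) (hd : ∀ k < M, d + k ≠ 0) :
    ∑ y ∈ range (M + 1), poch c y * poch (-M) y / (poch d y * y.factorial)
      = poch (d - c) M / poch d M := by
  rw [eq_div_iff (poch_ne_zero hd), sum_mul, poch_sub_eq_sum]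
  refine sum_congr rfl fun y hy => ?_
  have hyM : y ≤ M := Nat.lt_succ_iff.mp (mem_range.mp hy)
  have hdy : poch d y ≠ 0 := poch_ne_zero fun k hk => hd k (hk.trans_le hyM)
  have hfac : (y.factorial : ℂ) ≠ 0 := Nat.cast_ne_zero.mpr y.factorial_ne_zero
  rw [poch_neg, fallFac_natCast, Nat.descFactorial_eq_factorial_mul_choose,
    show poch d M = poch d y * poch (d + y) (M - y) by rw [← poch_add, Nat.add_sub_cancel' hyM]]
  push_cast
  field_simp

theorem hahn_summand_add (n y : ℕ) (a c e : ℂ) :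
    fallFac n ↑(n + y) * poch a (n + y) * poch c (n + y) / (poch e (n + y) * (n + y).factorial)
      = poch c n * poch a n / poch e n *
        (poch (a + n) y * poch (c + n) y / (poch (e + n) y * y.factorial)) := by
  have hF : fallFac n ↑(n + y) * y.factorial = (n + y).factorial := by
    have h := Nat.factorial_mul_descFactorial (Nat.le_add_right n y)
    rw [Nat.add_sub_cancel_left] at h
    rw [fallFac_natCast, mul_comm, ← Nat.cast_mul, h]
  have hF0 : fallFac n ↑(n + y) ≠ 0 := by
    rw [fallFac_natCast, Nat.cast_ne_zero, Ne, Nat.descFactorial_eq_zero_iff_lt]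
    omega
  rw [poch_add, poch_add, poch_add, ← hF, div_mul_div_comm]
  calc _ = fallFac n ↑(n + y) * (poch c n * poch a n * (poch (a + n) y * poch (c + n) y))
        / (fallFac n ↑(n + y) * (poch e n * (poch (e + n) y * y.factorial))) := by ring
    _ = _ := mul_div_mul_left _ _ hF0

/-- the `n`-th Hahn moment:
`∑_{x=0}^N φ_n(x) (a)_x (-N)_x / ((b+1)_x x!)
  = ((-N)_n (a)_n / (b+1)_n) ((b+1-a)_{N-n} / (b+1+n)_{N-n})`. -/
theorem hahn_moment (a b : ℂ) (N n : ℕ) (hn : n ≤ N)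
    (hb : ∀ k : ℕ, k < N → b + 1 + (k : ℂ) ≠ 0) :
    (∑ x ∈ Finset.range (N + 1),
        fallFac n (x : ℂ) * poch a x * poch (-(N : ℂ)) x / (poch (b + 1) x * (x.factorial : ℂ)))
      = (poch (-(N : ℂ)) n * poch a n / poch (b + 1) n) *
        (poch (b + 1 - a) (N - n) / poch (b + 1 + (n : ℂ)) (N - n)) := by
  obtain ⟨M, rfl⟩ := Nat.exists_eq_add_of_le hn
  have hd : ∀ k < M, b + 1 + n + k ≠ 0 := fun k hk => by
    simpa [add_assoc] using hb (n + k) (by omega)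
  rw [Nat.add_sub_cancel_left, add_assoc, sum_range_add,
    sum_eq_zero fun x hx => by
      rw [fallFac_natCast_of_lt (mem_range.mp hx), zero_mul, zero_mul, zero_div],
    zero_add]
  simp_rw [hahn_summand_add, ← mul_sum]
  rw [show -((n + M : ℕ) : ℂ) + n = -M by push_cast; ring, sum_poch_mul_poch_neg_div _ _ M hd,
    show b + 1 + n - (a + n) = b + 1 - a by ring]
end
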